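/- For every λ ∈ ℚ with λ ≠ 0 and every word w ∈ L*: m_λ(Δ̄_λ(w)) − 2^{dpt(w)}·w ∈ T_-, where m_λ : ℚ⟨L⟩ ⊗ ℚ⟨L⟩ → ℚ⟨L⟩ is the linear map induced by the product ⧢_λ and dpt(w) is the number of occurrences of the letter y in w. -/

import Mathlib

open scoped TensorProduct

/-- The two-letter alphabet `L = {d, y}`. -/
inductive Letter : Type
  | d : Letter
  | y : Letter
deriving DecidableEq

/-- `ℚ⟨L⟩`, the ℚ-vector space with basis the words on `L` (with the concatenation
product, it is the free noncommutative ℚ-algebra on `L`). -/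
abbrev V : Type := MonoidAlgebra ℚ (FreeMonoid Letter)

/-- The basis vector corresponding to a word. -/
noncomputable def wrd (w : List Letter) : V :=
  MonoidAlgebra.single (FreeMonoid.ofList w) (1 : ℚ)

/-- The shuffle-type product `⧢_λ` on basis words, defined recursively by
(P1) `e ⧢ w = w ⧢ e = w`; (P2) `(yu) ⧢ v = u ⧢ (yv) = y(u ⧢ v)`;
(P3) `(du) ⧢ (dv) = (1/λ)(d(u ⧢ v) − (du) ⧢ v − u ⧢ (dv))`. -/
noncomputable def shW (lam : ℚ) : List Letter → List Letter → V
  | [], v => wrd v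
  | u@(_ :: _), [] => wrd u
  | (Letter.y :: u), v => wrd [Letter.y] * shW lam u v
  | (Letter.d :: u), (Letter.y :: v) => wrd [Letter.y] * shW lam (Letter.d :: u) v
  | (Letter.d :: u), (Letter.d :: v) =>
      lam⁻¹ • (wrd [Letter.d] * shW lam u v
        - shW lam (Letter.d :: u) v - shW lam u (Letter.d :: v))
termination_by u v => u.length + v.length

/-- The ℚ-bilinear extension of `⧢_λ` to `ℚ⟨L⟩`. -/
noncomputable def shL (lam : ℚ) : V →ₗ[ℚ] V →ₗ[ℚ] V :=
  (Finsupp.lsum ℚ fun u => LinearMap.toSpanSingleton ℚ (V →ₗ[ℚ] V)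
    ((Finsupp.lsum ℚ fun v =>
      LinearMap.toSpanSingleton ℚ V (shW lam (FreeMonoid.toList u) (FreeMonoid.toList v)))
        ∘ₗ (MonoidAlgebra.coeffLinearEquiv ℚ : V ≃ₗ[ℚ] (FreeMonoid Letter →₀ ℚ)).toLinearMap))
    ∘ₗ (MonoidAlgebra.coeffLinearEquiv ℚ : V ≃ₗ[ℚ] (FreeMonoid Letter →₀ ℚ)).toLinearMap

/-- The values of `Δ̄_λ` on letters: `Δ̄_λ(y) = e⊗y + y⊗e`,
`Δ̄_λ(d) = e⊗d + d⊗e + λ·(d⊗d)`. -/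
noncomputable def dval (lam : ℚ) : Letter → (V ⊗[ℚ] V)
  | Letter.y => 1 ⊗ₜ wrd [Letter.y] + wrd [Letter.y] ⊗ₜ 1
  | Letter.d => 1 ⊗ₜ wrd [Letter.d] + wrd [Letter.d] ⊗ₜ 1
      + lam • (wrd [Letter.d] ⊗ₜ wrd [Letter.d])

/-- `Δ̄_λ : ℚ⟨L⟩ → ℚ⟨L⟩ ⊗ ℚ⟨L⟩`, the unique morphism of unital ℚ-algebras
(concatenation product on the source, componentwise concatenation on the tensor square)
with the prescribed values on the letters. -/
noncomputable def Delta (lam : ℚ) : V →ₐ[ℚ] (V ⊗[ℚ] V) :=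
  MonoidAlgebra.lift ℚ (V ⊗[ℚ] V) (FreeMonoid Letter) (FreeMonoid.lift (dval lam))

/-- The componentwise extension of `⧢_λ` to `ℚ⟨L⟩ ⊗ ℚ⟨L⟩`:
`(a⊗b) ⧢ (c⊗d) = (a ⧢ c) ⊗ (b ⧢ d)`. -/
noncomputable def shT (lam : ℚ) (x z : V ⊗[ℚ] V) : V ⊗[ℚ] V :=
  (TensorProduct.map (TensorProduct.lift (shL lam)) (TensorProduct.lift (shL lam)))
    ((TensorProduct.tensorTensorTensorComm ℚ V V V V) (x ⊗ₜ z))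

/-- `T₋ ⊆ ℚ⟨L⟩`: the span of the words ending in the letter `d`. -/
noncomputable def Tneg : Submodule ℚ V :=
  Submodule.span ℚ {x : V | ∃ w : List Letter, x = wrd (w ++ [Letter.d])}

/-! The difference is in fact zero: `m_λ ∘ Δ̄_λ` is `w ↦ 2^{dpt(w)} w`. Writing `m` for `m_λ`,
(P2) gives `m(Δ̄(y)·(a⊗b)) = 2y·m(a⊗b)`, and (P3), multiplied out by `λ`, says
`u ⧢ dv + du ⧢ v + λ (du ⧢ dv) = d(u ⧢ v)`, i.e. `m(Δ̄(d)·(a⊗b)) = d·m(a⊗b)`.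
Since `Δ̄` is multiplicative, induction on `w` finishes. -/

open Letter

lemma wrd_mul (u v : List Letter) : wrd u * wrd v = wrd (u ++ v) := by
  simp [wrd, MonoidAlgebra.single_mul_single, FreeMonoid.ofList_append]

lemma wrd_nil : wrd [] = 1 := rfl

lemma shW_nil_right (lam : ℚ) (u : List Letter) : shW lam u [] = wrd u := by
  cases u <;> simp [shW]

lemma shW_y_left (lam : ℚ) (u v : List Letter) :
    shW lam (y :: u) v = wrd [y] * shW lam u v := by
  cases v with
  | nil => rw [shW_nil_right, shW_nil_right, wrd_mul]; rfl
  | cons b v => rw [shW.eq_3]; simp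

lemma shW_y_right (lam : ℚ) (u v : List Letter) :
    shW lam u (y :: v) = wrd [y] * shW lam u v := by
  induction u with
  | nil => rw [shW.eq_1, shW.eq_1, wrd_mul]; rfl
  | cons a u ih =>
    cases a with
    | y => rw [shW_y_left, shW_y_left, ih]
    | d => rw [shW.eq_4]

lemma shW_d_d {lam : ℚ} (hlam : lam ≠ 0) (u v : List Letter) :
    shW lam u (d :: v) + shW lam (d :: u) v + lam • shW lam (d :: u) (d :: v) =
      wrd [d] * shW lam u v := by
  rw [shW.eq_5, smul_inv_smul₀ hlam]
  abel

lemma shL_wrd (lam : ℚ) (u v : List Letter) : shL lam (wrd u) (wrd v) = shW lam u v := by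
  simp [shL, wrd]

lemma bilin_ext_wrd {M : Type*} [AddCommMonoid M] [Module ℚ M] {f g : V →ₗ[ℚ] V →ₗ[ℚ] M}
    (h : ∀ u v, f (wrd u) (wrd v) = g (wrd u) (wrd v)) : f = g :=
  LinearMap.ext_basis (MonoidAlgebra.basis _ ℚ) (MonoidAlgebra.basis _ ℚ)
    fun x x' => h x.toList x'.toList

section

variable (lam : ℚ)

lemma shL_y_mul_left (p q : V) : shL lam (wrd [y] * p) q = wrd [y] * shL lam p q := by
  have : (shL lam).comp (LinearMap.mulLeft ℚ (wrd [y])) =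
      (shL lam).compr₂ (LinearMap.mulLeft ℚ (wrd [y])) :=
    bilin_ext_wrd fun u v => by simp [wrd_mul, shL_wrd, shW_y_left]
  exact LinearMap.congr_fun₂ this p q

lemma shL_y_mul_right (p q : V) : shL lam p (wrd [y] * q) = wrd [y] * shL lam p q := by
  have : (shL lam).compl₂ (LinearMap.mulLeft ℚ (wrd [y])) =
      (shL lam).compr₂ (LinearMap.mulLeft ℚ (wrd [y])) :=
    bilin_ext_wrd fun u v => by simp [wrd_mul, shL_wrd, shW_y_right]
  exact LinearMap.congr_fun₂ this p q

variable {lam}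

lemma shL_d_mul (hlam : lam ≠ 0) (p q : V) :
    shL lam p (wrd [d] * q) + shL lam (wrd [d] * p) q +
      lam • shL lam (wrd [d] * p) (wrd [d] * q) = wrd [d] * shL lam p q := by
  let dL := LinearMap.mulLeft ℚ (wrd [d])
  have : (shL lam).compl₂ dL + (shL lam).comp dL + lam • ((shL lam).comp dL).compl₂ dL =
      (shL lam).compr₂ dL :=
    bilin_ext_wrd fun u v => by simpa [dL, wrd_mul, shL_wrd] using shW_d_d hlam u v
  exact LinearMap.congr_fun₂ this p q

end

lemma lift_shL_dval_y_mul (lam : ℚ) (x : V ⊗[ℚ] V) :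
    TensorProduct.lift (shL lam) (dval lam y * x) =
      (2 : ℚ) • (wrd [y] * TensorProduct.lift (shL lam) x) := by
  induction x using TensorProduct.induction_on with
  | zero => simp
  | add a b ha hb => simp only [mul_add, map_add, ha, hb, smul_add]
  | tmul p q =>
    simp only [dval, add_mul, Algebra.TensorProduct.tmul_mul_tmul, one_mul, map_add,
      TensorProduct.lift.tmul, shL_y_mul_left, shL_y_mul_right, two_smul]

lemma lift_shL_dval_d_mul {lam : ℚ} (hlam : lam ≠ 0) (x : V ⊗[ℚ] V) :
    TensorProduct.lift (shL lam) (dval lam d * x) = wrd [d] * TensorProduct.lift (shL lam) x := by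
  induction x using TensorProduct.induction_on with
  | zero => simp
  | add a b ha hb => simp only [mul_add, map_add, ha, hb]
  | tmul p q =>
    simp only [dval, add_mul, smul_mul_assoc, Algebra.TensorProduct.tmul_mul_tmul, one_mul,
      map_add, map_smul, TensorProduct.lift.tmul]
    exact shL_d_mul hlam p q

lemma Delta_wrd_cons (lam : ℚ) (a : Letter) (u : List Letter) :
    Delta lam (wrd (a :: u)) = dval lam a * Delta lam (wrd u) := by
  rw [← List.singleton_append, ← wrd_mul, map_mul]
  simp [Delta, wrd, MonoidAlgebra.lift_single]

lemma lift_shL_Delta_wrd {lam : ℚ} (hlam : lam ≠ 0) (w : List Letter) :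
    TensorProduct.lift (shL lam) (Delta lam (wrd w)) = (2 : ℚ) ^ w.count y • wrd w := by
  induction w with
  | nil =>
    rw [wrd_nil, map_one, Algebra.TensorProduct.one_def, TensorProduct.lift.tmul, ← wrd_nil,
      shL_wrd, shW.eq_1, List.count_nil, pow_zero, one_smul]
  | cons a u ih =>
    rw [Delta_wrd_cons, ← List.singleton_append, ← wrd_mul, List.count_append]
    cases a with
    | y => rw [lift_shL_dval_y_mul, ih, mul_smul_comm, smul_smul]; simp [pow_add]
    | d => rw [lift_shL_dval_d_mul hlam, ih, mul_smul_comm]; simp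

/-- For `λ ≠ 0` and any word `w`: `m_λ(Δ̄_λ(w)) − 2^{dpt(w)}·w ∈ T₋`, where `m_λ` is the
linear map induced by `⧢_λ` and `dpt(w)` is the number of occurrences of the letter `y`
in `w`. -/
theorem stmt_13 (lam : ℚ) (hlam : lam ≠ 0) (w : List Letter) :
    TensorProduct.lift (shL lam) (Delta lam (wrd w)) -
        ((2 : ℚ) ^ (w.count Letter.y)) • wrd w ∈ Tneg := by
  rw [lift_shL_Delta_wrd hlam, sub_self]
  exact Tneg.zero_mem
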